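/- arXiv:2502.09030 — 2 statements merged into one kernel-verified Lean document; each statement's English description precedes it below -/
import Mathlib

section
/- Let g : [a,b] → ℝ be continuously differentiable with a < b, and let q ≥ 1. Then sup_{t∈[a,b]} |g(t)|^q ≤ (b-a)^{-1} ∫_a^b |g(t)|^q dt + q ∫_a^b |g(t)|^{q-1} |g'(t)| dt. -/
open intervalIntegral Set MeasureTheory
open scoped Interval

lemma sogge_aux_rpow_mul_abs {q : ℝ} (hq : 1 < q) (x : ℝ) :
    |x| ^ (q - 2) * |x| = |x| ^ (q - 1) := by
  rcases eq_or_ne x 0 with rfl | hx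
  · simp [Real.zero_rpow (by linarith : q - 1 ≠ 0)]
  · rw [show q - 1 = (q - 2) + 1 by ring, Real.rpow_add_one (abs_ne_zero.2 hx)]

lemma sogge_aux_cont_rpow_mul {q : ℝ} (hq : 1 < q) :
    Continuous (fun x : ℝ => |x| ^ (q - 2) * x) := by
  rw [continuous_iff_continuousAt]
  intro x
  rcases eq_or_ne x 0 with rfl | hx
  · have hb : Filter.Tendsto (fun y : ℝ => |y| ^ (q - 1)) (nhds 0) (nhds 0) := by
      have hc : ContinuousAt (fun y : ℝ => |y| ^ (q - 1)) 0 :=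
        ((Real.continuous_rpow_const (by linarith)).comp continuous_abs).continuousAt
      simpa [Real.zero_rpow (by linarith : q - 1 ≠ 0)] using hc.tendsto
    have ht : Filter.Tendsto (fun y : ℝ => |y| ^ (q - 2) * y) (nhds 0) (nhds 0) := by
      rw [tendsto_zero_iff_abs_tendsto_zero]
      apply squeeze_zero (fun y => abs_nonneg _) _ hb
      intro y
      rw [abs_mul, Real.abs_rpow_of_nonneg (abs_nonneg y), abs_abs,
        sogge_aux_rpow_mul_abs hq]
    have : ContinuousAt (fun y : ℝ => |y| ^ (q - 2) * y) 0 := by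
      rw [ContinuousAt]
      simpa using ht
    exact this
  · exact (((Real.continuousAt_rpow_const |x| (q - 2) (Or.inl (abs_ne_zero.2 hx))).comp
      continuous_abs.continuousAt).mul continuousAt_id)

/-- The integral of `|f|` over a subinterval bounds the absolute value of the
interval integral of `f`. -/
lemma sogge_aux_integral_abs_le {f : ℝ → ℝ} {a b s t : ℝ} (hab : a ≤ b)
    (hs : s ∈ Icc a b) (ht : t ∈ Icc a b) (hf : ContinuousOn f (Icc a b)) :
    |∫ r in s..t, f r| ≤ ∫ r in a..b, |f r| := by
  have h1 : Ι s t ⊆ Ioc a b := by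
    rw [Set.uIoc]
    exact Ioc_subset_Ioc (le_min hs.1 ht.1) (max_le hs.2 ht.2)
  have hint : IntegrableOn (fun r => |f r|) (Ioc a b) volume :=
    (hf.abs.integrableOn_Icc).mono_set Ioc_subset_Icc_self
  calc |∫ r in s..t, f r| ≤ ∫ r in Ι s t, |f r| := by
        simpa [Real.norm_eq_abs] using
          intervalIntegral.norm_integral_le_integral_norm_uIoc (f := f) (a := s) (b := t)
            (μ := volume)
    _ ≤ ∫ r in Ioc a b, |f r| :=
        setIntegral_mono_set hint
          (Filter.Eventually.of_forall (fun r => abs_nonneg (f r))) h1.eventuallyLE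
    _ = ∫ r in a..b, |f r| := (intervalIntegral.integral_of_le hab).symm

/-- One-dimensional pointwise version of Sogge's maximal lemma: for `g` continuously
differentiable on `[a,b]` and `q ≥ 1`,
`sup_{t∈[a,b]} |g(t)|^q ≤ (b-a)⁻¹ ∫_a^b |g|^q + q ∫_a^b |g|^{q-1} |g'|`. -/
theorem sogge_pointwise_maximal (a b q : ℝ) (hab : a < b) (hq : 1 ≤ q)
    (g g' : ℝ → ℝ)
    (hderiv : ∀ t ∈ Icc a b, HasDerivAt g (g' t) t)
    (hcont : ContinuousOn g' (Icc a b)) :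
    ∀ t ∈ Icc a b,
      |g t| ^ q ≤ (b - a)⁻¹ * (∫ s in a..b, |g s| ^ q)
        + q * ∫ s in a..b, |g s| ^ (q - 1) * |g' s| := by
  intro t ht
  set K := ∫ s in a..b, |g s| ^ (q - 1) * |g' s| with hK
  have hgc : ContinuousOn g (Icc a b) := fun r hr =>
    (hderiv r hr).continuousAt.continuousWithinAt
  -- key pointwise estimate
  have hI : ∀ s ∈ Icc a b, |g t| ^ q ≤ |g s| ^ q + q * K := by
    intro s hs
    have hsub : uIcc s t ⊆ Icc a b := by
      rw [show Icc a b = uIcc a b from (uIcc_of_le hab.le).symm]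
      exact uIcc_subset_uIcc (by rwa [uIcc_of_le hab.le]) (by rwa [uIcc_of_le hab.le])
    rcases eq_or_lt_of_le hq with hq1 | hq'
    · -- q = 1
      have hKv : K = ∫ r in a..b, |g' r| := by
        rw [hK]
        apply intervalIntegral.integral_congr
        intro r _
        simp [← hq1]
      have hftc : ∫ r in s..t, g' r = g t - g s :=
        intervalIntegral.integral_eq_sub_of_hasDerivAt
          (fun x hx => hderiv x (hsub hx))
          ((hcont.mono hsub).intervalIntegrable)
      have h2 : |g t| - |g s| ≤ |g t - g s| := abs_sub_abs_le_abs_sub _ _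
      have h3 : |g t - g s| ≤ ∫ r in a..b, |g' r| := by
        rw [← hftc]
        exact sogge_aux_integral_abs_le hab.le hs ht hcont
      rw [← hq1]
      simp only [Real.rpow_one]
      rw [hKv] at *
      linarith
    · -- q > 1
      set D := fun r => q * (|g r| ^ (q - 2) * g r) * g' r with hD
      have hφ : ∀ x ∈ uIcc s t, HasDerivAt (fun r => |g r| ^ q) (D x) x := by
        intro x hx
        have : HasDerivAt (fun r => |g r| ^ q) _ x := (hasDerivAt_abs_rpow (g x) hq').comp x (hderiv x (hsub hx))
        convert this using 1
        simp only [hD]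
        ring
      have hDc : ContinuousOn D (Icc a b) :=
        ((continuousOn_const.mul
          ((sogge_aux_cont_rpow_mul hq').comp_continuousOn hgc)).mul hcont)
      have hftc : ∫ r in s..t, D r = |g t| ^ q - |g s| ^ q :=
        intervalIntegral.integral_eq_sub_of_hasDerivAt hφ
          ((hDc.mono hsub).intervalIntegrable)
      have h3 : |∫ r in s..t, D r| ≤ ∫ r in a..b, |D r| :=
        sogge_aux_integral_abs_le hab.le hs ht hDc
      have h4 : ∫ r in a..b, |D r| ≤ q * K := by
        rw [hK, ← intervalIntegral.integral_const_mul]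
        apply intervalIntegral.integral_mono_on hab.le
        · apply ContinuousOn.intervalIntegrable
          rw [uIcc_of_le hab.le]
          exact hDc.abs
        · apply ContinuousOn.intervalIntegrable
          rw [uIcc_of_le hab.le]
          exact continuousOn_const.mul
            ((hgc.abs.rpow_const (fun x _ => Or.inr (by linarith))).mul hcont.abs)
        · intro r _
          have : |D r| = q * (|g r| ^ (q - 1) * |g' r|) := by
            rw [hD]
            simp only [abs_mul, abs_abs, abs_of_nonneg (le_trans zero_le_one hq : (0:ℝ) ≤ q),
              Real.abs_rpow_of_nonneg (abs_nonneg (g r)), abs_abs]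
            rw [mul_assoc, mul_assoc]
            congr 1
            rw [← mul_assoc, sogge_aux_rpow_mul_abs hq']
          rw [this]
      have := hftc ▸ (le_trans (le_abs_self _) (le_trans h3 h4))
      linarith
  -- averaging over s
  have hint : IntervalIntegrable (fun s => |g s| ^ q) volume a b := by
    apply ContinuousOn.intervalIntegrable
    rw [uIcc_of_le hab.le]
    exact hgc.abs.rpow_const (fun x _ => Or.inr (by linarith))
  have h2 : ∫ _ in a..b, (|g t| ^ q - q * K) ≤ ∫ s in a..b, |g s| ^ q :=
    intervalIntegral.integral_mono_on hab.le intervalIntegrable_const hint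
      (fun s hs => by linarith [hI s hs])
  rw [intervalIntegral.integral_const, smul_eq_mul] at h2
  have hba : (0:ℝ) < b - a := by linarith
  have h5 : |g t| ^ q - q * K ≤ (b - a)⁻¹ * ∫ s in a..b, |g s| ^ q := by
    rw [← div_eq_inv_mul, le_div_iff₀ hba]
    linarith
  linarith
end

section
/- Let n ≥ 2 and let χ ∈ C^∞(ℝⁿ \ {0}) be homogeneous of degree 0, with χ(ξ) = 1 when |ξ/|ξ| − v_1| ≤ 10^{−2} and χ(ξ) = 0 when |ξ/|ξ| − v_1| ≥ 9^{−2}, where v_1 = (1,0,…,0). Let φ ∈ C_c^∞((0,∞)) with φ ≥ 0 and φ = 1 on [1,2], and set f̂_j(ξ) = φ(2^{−j}|ξ|) χ(ξ). Then for every multi-index free bound: sup over t ∈ [1,2] and over x with |x/|x| − v_1| ≤ 10^{−2} of |∫ e^{2πi(x·ξ + t|ξ|)} φ(2^{−j}|ξ|) χ(ξ) dξ| ≤ C_N 2^{−Nj} for every N, in particular ≤ C 2^{−nj}. -/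
open MeasureTheory Real Set
open scoped ContDiff

private lemma osc_exp_hasDerivAt (μ : ℝ) (ρ : ℝ) :
    HasDerivAt (fun ρ : ℝ => Complex.exp (((μ * ρ : ℝ) : ℂ) * Complex.I))
      ((μ : ℂ) * Complex.I * Complex.exp (((μ * ρ : ℝ) : ℂ) * Complex.I)) ρ := by
  have h0 : HasDerivAt (fun ρ : ℝ => ((ρ : ℂ))) 1 ρ := by
    simpa using (hasDerivAt_id ρ).ofReal_comp
  have h1 : HasDerivAt (fun ρ : ℝ => ((μ : ℂ) * Complex.I) * (ρ : ℂ))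
      ((μ : ℂ) * Complex.I) ρ := by
    simpa using h0.const_mul ((μ : ℂ) * Complex.I)
  have h2 : HasDerivAt (fun ρ : ℝ => (((μ * ρ : ℝ) : ℂ)) * Complex.I)
      ((μ : ℂ) * Complex.I) ρ := by
    convert h1 using 2 with ρ
    push_cast
    ring
  simpa [mul_comm] using h2.cexp

private lemma osc_step (μ : ℝ) (hμ : μ ≠ 0) (h : ℝ → ℂ) (hh : ContDiff ℝ ∞ h)
    (hsupp : HasCompactSupport h) :
    ∫ ρ : ℝ, h ρ * Complex.exp (((μ * ρ : ℝ) : ℂ) * Complex.I)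
      = (-((μ : ℂ) * Complex.I)⁻¹) *
        ∫ ρ : ℝ, deriv h ρ * Complex.exp (((μ * ρ : ℝ) : ℂ) * Complex.I) := by
  set e : ℝ → ℂ := fun ρ : ℝ => Complex.exp (((μ * ρ : ℝ) : ℂ) * Complex.I) with he_def
  have hc : ((μ : ℂ) * Complex.I) ≠ 0 :=
    mul_ne_zero (by exact_mod_cast hμ) Complex.I_ne_zero
  have he : ∀ ρ : ℝ, HasDerivAt e ((μ : ℂ) * Complex.I * e ρ) ρ := fun ρ => osc_exp_hasDerivAt μ ρ
  have hecont : Continuous e := by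
    have : Continuous fun ρ : ℝ => (((μ * ρ : ℝ) : ℂ)) * Complex.I := by fun_prop
    exact Complex.continuous_exp.comp this
  have hd : ContDiff ℝ ∞ (deriv h) := (contDiff_infty_iff_deriv.mp hh).2
  have hdiff : Differentiable ℝ h := hh.differentiable (by simp)
  have hediff : Differentiable ℝ e := fun ρ => (he ρ).differentiableAt
  have hfd : ∀ ρ : ℝ, fderiv ℝ e ρ 1 = (μ : ℂ) * Complex.I * e ρ := fun ρ => by
    rw [← toSpanSingleton_deriv] ; simp [(he ρ).deriv]
  have hfdh : ∀ ρ : ℝ, fderiv ℝ h ρ 1 = deriv h ρ := fun ρ => rfl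
  have int1 : Integrable (fun ρ : ℝ => deriv h ρ * e ρ) :=
    ((hd.continuous).mul hecont).integrable_of_hasCompactSupport (hsupp.deriv.mul_right)
  have int2 : Integrable (fun ρ : ℝ => h ρ * ((μ : ℂ) * Complex.I * e ρ)) := by
    apply Continuous.integrable_of_hasCompactSupport
    · exact (hh.continuous).mul (continuous_const.mul hecont)
    · exact hsupp.mul_right
  have int3 : Integrable (fun ρ : ℝ => h ρ * e ρ) :=
    ((hh.continuous).mul hecont).integrable_of_hasCompactSupport (hsupp.mul_right)
  have key := integral_mul_fderiv_eq_neg_fderiv_mul_of_integrable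
    (f := h) (g := e) (v := (1:ℝ)) ?_ ?_ int3 (fun x _ => hdiff x) (fun x _ => hediff x)
  · -- key : ∫ h * fderiv e 1 = - ∫ fderiv h 1 * e
    have lhs : (fun ρ : ℝ => h ρ * fderiv ℝ e ρ 1)
        = fun ρ : ℝ => ((μ : ℂ) * Complex.I) * (h ρ * e ρ) :=
      funext fun ρ => by rw [hfd ρ]; ring
    have rhs : (fun ρ : ℝ => fderiv ℝ h ρ 1 * e ρ) = fun ρ : ℝ => deriv h ρ * e ρ :=
      funext fun ρ => by rw [hfdh ρ]
    rw [lhs, rhs, integral_const_mul] at key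
    have key2 : (∫ ρ : ℝ, deriv h ρ * e ρ)
        = -(((μ : ℂ) * Complex.I) * ∫ ρ : ℝ, h ρ * e ρ) :=
      neg_eq_iff_eq_neg.mp key.symm
    show (∫ ρ : ℝ, h ρ * e ρ) = _
    rw [show (∫ ρ : ℝ, deriv h ρ * Complex.exp (((μ * ρ : ℝ) : ℂ) * Complex.I))
        = ∫ ρ : ℝ, deriv h ρ * e ρ from rfl, key2, neg_mul_neg, ← mul_assoc,
      inv_mul_cancel₀ hc, one_mul]
  · -- Integrable fderiv h 1 * e
    have : (fun ρ : ℝ => fderiv ℝ h ρ 1 * e ρ) = fun ρ : ℝ => deriv h ρ * e ρ := by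
      funext ρ; rw [hfdh ρ]
    rw [this]; exact int1
  · have : (fun ρ : ℝ => h ρ * fderiv ℝ e ρ 1)
        = fun ρ : ℝ => h ρ * ((μ : ℂ) * Complex.I * e ρ) := by
      funext ρ; rw [hfd ρ]
    rw [this]; exact int2

private lemma hcs_iter (h : ℝ → ℂ) (hsupp : HasCompactSupport h) (k : ℕ) :
    HasCompactSupport (deriv^[k] h) := by
  induction k with
  | zero => exact hsupp
  | succ k ih => rw [Function.iterate_succ_apply']; exact ih.deriv

private lemma osc_iter (μ : ℝ) (hμ : μ ≠ 0) (h : ℝ → ℂ) (hh : ContDiff ℝ ∞ h)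
    (hsupp : HasCompactSupport h) (M : ℕ) :
    ∫ ρ : ℝ, h ρ * Complex.exp (((μ * ρ : ℝ) : ℂ) * Complex.I)
      = (-((μ : ℂ) * Complex.I)⁻¹) ^ M *
        ∫ ρ : ℝ, deriv^[M] h ρ * Complex.exp (((μ * ρ : ℝ) : ℂ) * Complex.I) := by
  induction M with
  | zero => simp
  | succ M ih =>
    rw [ih, osc_step μ hμ (deriv^[M] h) (hh.iterate_deriv M) (hcs_iter h hsupp M),
      ← Function.iterate_succ_apply' deriv M h, pow_succ, mul_assoc]

private lemma osc_bound (h : ℝ → ℂ) (hh : ContDiff ℝ ∞ h) (hsupp : HasCompactSupport h)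
    (M : ℕ) (μ : ℝ) (hμ : 1 ≤ |μ|) :
    ‖∫ ρ : ℝ, h ρ * Complex.exp (((μ * ρ : ℝ) : ℂ) * Complex.I)‖
      ≤ (∫ ρ : ℝ, ‖deriv^[M] h ρ‖) / |μ| ^ M := by
  have hμ0 : μ ≠ 0 := by intro h0; rw [h0] at hμ; simp at hμ; linarith
  rw [osc_iter μ hμ0 h hh hsupp M, norm_mul, norm_pow, norm_neg, norm_inv]
  rw [show ‖(μ : ℂ) * Complex.I‖ = |μ| from by
    rw [norm_mul, Complex.norm_I, mul_one, Complex.norm_real, Real.norm_eq_abs]]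
  have h1 : ‖∫ ρ : ℝ, deriv^[M] h ρ * Complex.exp (((μ * ρ : ℝ) : ℂ) * Complex.I)‖
      ≤ ∫ ρ : ℝ, ‖deriv^[M] h ρ‖ := by
    refine (norm_integral_le_integral_norm _).trans_eq ?_
    congr 1 with ρ
    rw [norm_mul, show ‖Complex.exp (((μ * ρ : ℝ) : ℂ) * Complex.I)‖ = 1 from by
      rw [Complex.norm_exp_ofReal_mul_I], mul_one]
  calc (|μ|⁻¹) ^ M * ‖∫ ρ : ℝ, deriv^[M] h ρ * Complex.exp (((μ * ρ : ℝ) : ℂ) * Complex.I)‖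
      ≤ (|μ|⁻¹) ^ M * ∫ ρ : ℝ, ‖deriv^[M] h ρ‖ := by
        apply mul_le_mul_of_nonneg_left h1 (by positivity)
    _ = (∫ ρ : ℝ, ‖deriv^[M] h ρ‖) / |μ| ^ M := by
        rw [inv_pow]; ring


set_option maxHeartbeats 1000000

/-- Non-stationary phase estimate (3.10): with `χ` smooth homogeneous of degree `0`
supported in a narrow cone about `v₁ = (1,0,…,0)` and `φ` a dyadic bump, the oscillatory
integral `∫ e^{2πi(x·ξ + t|ξ|)} φ(2^{−j}|ξ|) χ(ξ) dξ` is `O_N(2^{−Nj})` uniformly over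
`t ∈ [1,2]` and spatial directions `x/|x|` close to `v₁`; in particular it is `O(2^{−nj})`. -/
theorem nonstationary_phase_cone (n : ℕ) (hn : 2 ≤ n)
    (χ : EuclideanSpace ℝ (Fin n) → ℝ)
    (hχsmooth : ContDiffOn ℝ (⊤ : ℕ∞) χ {0}ᶜ)
    (hχhom : ∀ r : ℝ, 0 < r → ∀ ξ, χ (r • ξ) = χ ξ)
    (hχone : ∀ ξ : EuclideanSpace ℝ (Fin n), ξ ≠ 0 →
      ‖(‖ξ‖⁻¹ • ξ) - EuclideanSpace.single (⟨0, by omega⟩ : Fin n) (1 : ℝ)‖ ≤ 1/100 → χ ξ = 1)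
    (hχzero : ∀ ξ : EuclideanSpace ℝ (Fin n), ξ ≠ 0 →
      1/81 ≤ ‖(‖ξ‖⁻¹ • ξ) - EuclideanSpace.single (⟨0, by omega⟩ : Fin n) (1 : ℝ)‖ → χ ξ = 0)
    (φ : ℝ → ℝ) (hφsmooth : ContDiff ℝ (⊤ : ℕ∞) φ) (hφsupp : HasCompactSupport φ)
    (hφsupp' : Function.support φ ⊆ Ioi (0 : ℝ))
    (hφpos : ∀ r, 0 ≤ φ r) (hφone : ∀ r ∈ Icc (1 : ℝ) 2, φ r = 1) :
    ∀ N : ℕ, ∃ C > 0, ∀ j : ℕ, 1 ≤ j → ∀ t ∈ Icc (1 : ℝ) 2,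
      ∀ x : EuclideanSpace ℝ (Fin n), x ≠ 0 →
        ‖(‖x‖⁻¹ • x) - EuclideanSpace.single (⟨0, by omega⟩ : Fin n) (1 : ℝ)‖ ≤ 1/100 →
        ‖∫ ξ : EuclideanSpace ℝ (Fin n),
            Complex.exp (2 * π * Complex.I * (((inner ℝ x ξ : ℝ)) + t * ‖ξ‖)) *
              (φ (2 ^ (-(j : ℝ)) * ‖ξ‖) : ℂ) * (χ ξ : ℂ)‖
          ≤ C * 2 ^ (-(N : ℝ) * j) := by
  intro N
  classical
  set e1 : EuclideanSpace ℝ (Fin n) := EuclideanSpace.single (⟨0, by omega⟩ : Fin n) (1 : ℝ) with he1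
  have he1norm : ‖e1‖ = 1 := by rw [he1, EuclideanSpace.norm_single]; norm_num
  have he1ne : e1 ≠ 0 := by
    intro h0; rw [h0, norm_zero] at he1norm; norm_num at he1norm
  haveI : Nontrivial (EuclideanSpace ℝ (Fin n)) := ⟨e1, 0, he1ne⟩
  have hdim : Module.finrank ℝ (EuclideanSpace ℝ (Fin n)) = n := finrank_euclideanSpace_fin
  -- φ basics
  have hφ0 : ∀ r : ℝ, r ≤ 0 → φ r = 0 := by
    intro r hr
    by_contra hne
    exact absurd (hφsupp' (Function.mem_support.mpr hne)) (by simp [not_lt.mpr hr])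
  obtain ⟨R0, hR0⟩ := hφsupp.isBounded.subset_closedBall 0
  set R : ℝ := max R0 1 with hRdef
  have hR1 : 1 ≤ R := le_max_right _ _
  have hR : ∀ r : ℝ, φ r ≠ 0 → |r| ≤ R := by
    intro r hr
    have : r ∈ tsupport φ := subset_tsupport φ (Function.mem_support.mpr hr)
    have := hR0 this
    rw [Metric.mem_closedBall, Real.dist_eq, sub_zero] at this
    exact this.trans (le_max_left _ _)
  -- bound for χ on the sphere
  have hsphere_ne : ∀ u : EuclideanSpace ℝ (Fin n), u ∈ Metric.sphere (0 : EuclideanSpace ℝ (Fin n)) 1 → u ≠ 0 := by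
    intro u hu h0
    rw [mem_sphere_zero_iff_norm] at hu
    rw [h0, norm_zero] at hu; norm_num at hu
  obtain ⟨B0, hB0⟩ := (isCompact_sphere (0 : EuclideanSpace ℝ (Fin n)) 1).exists_bound_of_continuousOn
    (hχsmooth.continuousOn.mono (fun u hu => hsphere_ne u hu))
  set Bχ : ℝ := max B0 0 with hBχdef
  have hBχ0 : 0 ≤ Bχ := le_max_right _ _
  have hBχ : ∀ ξ : EuclideanSpace ℝ (Fin n), ξ ≠ 0 → |χ ξ| ≤ Bχ := by
    intro ξ hξ
    have h1 : χ ξ = χ (‖ξ‖⁻¹ • ξ) := (hχhom ‖ξ‖⁻¹ (inv_pos.mpr (norm_pos_iff.mpr hξ)) ξ).symm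
    have h2 : ‖ξ‖⁻¹ • ξ ∈ Metric.sphere (0 : EuclideanSpace ℝ (Fin n)) 1 := by
      rw [mem_sphere_zero_iff_norm]
      exact norm_smul_inv_norm hξ
    rw [h1]
    exact le_trans (by simpa using (hB0 _ h2)) (le_max_left _ _)
  -- the fixed 1D profile
  set M : ℕ := N + n with hMdef
  set g₀ : ℝ → ℂ := fun ρ => ((ρ ^ (n - 1) * φ ρ : ℝ) : ℂ) with hg₀def
  have hg₀smooth : ContDiff ℝ ∞ g₀ :=
    Complex.ofRealCLM.contDiff.comp ((contDiff_id.pow (n - 1)).mul (hφsmooth.of_le (by simp)))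
  have hg₀supp : HasCompactSupport g₀ := by
    apply HasCompactSupport.mono' (hφsupp)
    intro ρ hρ
    have : φ ρ ≠ 0 := by
      intro h0
      apply hρ
      simp [hg₀def, h0]
    exact subset_tsupport φ (Function.mem_support.mpr this)
  set CM : ℝ := ∫ ρ : ℝ, ‖deriv^[M] g₀ ρ‖ with hCMdef
  have hCM0 : 0 ≤ CM := integral_nonneg (fun _ => norm_nonneg _)
  set σv : ℝ := ((volume : Measure (EuclideanSpace ℝ (Fin n))).toSphere univ).toReal with hσdef
  have hσ0 : 0 ≤ σv := ENNReal.toReal_nonneg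
  refine ⟨σv * Bχ * CM + 1, by positivity, ?_⟩
  intro j hj t ht x hx hxdir
  set a : ℝ := (2 : ℝ) ^ j with hadef
  have ha1 : (1 : ℝ) ≤ a := one_le_pow₀ (by norm_num)
  have ha0 : (0 : ℝ) < a := lt_of_lt_of_le one_pos ha1
  have h2j : (2 : ℝ) ^ (-(j : ℝ)) = a⁻¹ := by
    rw [Real.rpow_neg (by norm_num), Real.rpow_natCast]
  -- positivity of the phase coefficient on the support of χ
  have hinner_nonneg : ∀ u : EuclideanSpace ℝ (Fin n), ‖u‖ = 1 → χ u ≠ 0 → (0 : ℝ) ≤ (inner ℝ x u : ℝ) := by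
    intro u hu hchi
    have hu81 : ‖u - e1‖ < 1 / 81 := by
      by_contra hcon
      push_neg at hcon
      have hu0 : u ≠ 0 := by intro h0; rw [h0, norm_zero] at hu; norm_num at hu
      exact hchi (hχzero u hu0 (by rw [hu, inv_one, one_smul]; exact hcon))
    set y : EuclideanSpace ℝ (Fin n) := ‖x‖⁻¹ • x with hydef
    have hxn : ‖x‖ ≠ 0 := norm_ne_zero_iff.mpr hx
    have h1 : (inner ℝ x u : ℝ) = ‖x‖ * (inner ℝ y u : ℝ) := by
      rw [hydef, real_inner_smul_left, ← mul_assoc, mul_inv_cancel₀ hxn, one_mul]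
    have hy1 : ‖y‖ = 1 := norm_smul_inv_norm hx
    have h2 : (inner ℝ y u : ℝ)
        = (inner ℝ (y - e1) u : ℝ) + (inner ℝ e1 (u - e1) : ℝ) + (inner ℝ e1 e1 : ℝ) := by
      rw [inner_sub_left, inner_sub_right]; ring
    have he11 : (inner ℝ e1 e1 : ℝ) = 1 := by
      rw [real_inner_self_eq_norm_mul_norm, he1norm]; norm_num
    have hb1 : |(inner ℝ (y - e1) u : ℝ)| ≤ 1 / 100 := by
      refine le_trans (abs_real_inner_le_norm _ _) ?_
      rw [hu, mul_one]
      exact hxdir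
    have hb2 : |(inner ℝ e1 (u - e1) : ℝ)| ≤ 1 / 81 := by
      refine le_trans (abs_real_inner_le_norm _ _) ?_
      rw [he1norm, one_mul]
      exact hu81.le
    have hb1' := abs_le.mp hb1
    have hb2' := abs_le.mp hb2
    rw [h1]
    apply mul_nonneg (norm_nonneg x)
    rw [h2, he11]
    linarith
  -- the integrand
  set g : EuclideanSpace ℝ (Fin n) → ℂ := fun ξ =>
    Complex.exp (2 * π * Complex.I * (((inner ℝ x ξ : ℝ)) + t * ‖ξ‖)) *
      (φ (2 ^ (-(j : ℝ)) * ‖ξ‖) : ℂ) * (χ ξ : ℂ) with hgdef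
  have hφzero : φ 0 = 0 := hφ0 0 le_rfl
  have hgexp : ∀ ξ : EuclideanSpace ℝ (Fin n),
      ‖Complex.exp (2 * π * Complex.I * (((inner ℝ x ξ : ℝ)) + t * ‖ξ‖))‖ = 1 := by
    intro ξ
    rw [show (2 * (π : ℂ) * Complex.I * (((inner ℝ x ξ : ℝ) : ℂ) + (t : ℂ) * (‖ξ‖ : ℂ)))
        = ((2 * π * ((inner ℝ x ξ : ℝ) + t * ‖ξ‖) : ℝ) : ℂ) * Complex.I from by push_cast; ring,
      Complex.norm_exp_ofReal_mul_I]
  have hexp_cont : Continuous fun ξ : EuclideanSpace ℝ (Fin n) =>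
      Complex.exp (2 * π * Complex.I * (((inner ℝ x ξ : ℝ)) + t * ‖ξ‖)) := by
    apply Complex.continuous_exp.comp
    apply continuous_const.mul
    exact (Complex.continuous_ofReal.comp (continuous_const.inner continuous_id)).add
      (continuous_const.mul (Complex.continuous_ofReal.comp continuous_norm))
  have hφc : Continuous fun ξ : EuclideanSpace ℝ (Fin n) => (φ (2 ^ (-(j : ℝ)) * ‖ξ‖) : ℂ) :=
    Complex.continuous_ofReal.comp ((hφsmooth.continuous).comp
      (continuous_const.mul continuous_norm))
  have hgbound : ∀ ξ : EuclideanSpace ℝ (Fin n), ‖g ξ‖ ≤ Bχ * |φ (2 ^ (-(j : ℝ)) * ‖ξ‖)| := by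
    intro ξ
    rcases eq_or_ne ξ 0 with rfl | hξ
    · simp [hgdef, hφzero]
    · rw [hgdef]
      simp only
      rw [norm_mul, norm_mul, hgexp ξ, one_mul, Complex.norm_real, Complex.norm_real,
        Real.norm_eq_abs, Real.norm_eq_abs]
      exact mul_le_mul_of_nonneg_left (hBχ ξ hξ) (abs_nonneg _) |>.trans
        (le_of_eq (mul_comm _ _))
  have hgcont : Continuous g := by
    rw [continuous_iff_continuousAt]
    intro ξ0
    rcases eq_or_ne ξ0 0 with rfl | hne
    · have hg0 : g 0 = 0 := by
        rw [hgdef]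
        simp only
        rw [show (2 : ℝ) ^ (-(j : ℝ)) * ‖(0 : EuclideanSpace ℝ (Fin n))‖ = 0 by simp, hφzero]
        simp
      rw [ContinuousAt, hg0]
      apply squeeze_zero_norm hgbound
      have hcont : Continuous fun ξ : EuclideanSpace ℝ (Fin n) =>
          Bχ * |φ (2 ^ (-(j : ℝ)) * ‖ξ‖)| := by
        apply continuous_const.mul
        exact (hφsmooth.continuous.comp (continuous_const.mul continuous_norm)).abs
      have h00 : Bχ * |φ (2 ^ (-(j : ℝ)) * ‖(0 : EuclideanSpace ℝ (Fin n))‖)| = 0 := by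
        simp [hφzero]
      have htd := hcont.tendsto (0 : EuclideanSpace ℝ (Fin n))
      rwa [h00] at htd
    · have hχc : ContinuousAt χ ξ0 := by
        apply (hχsmooth.continuousOn.continuousAt (s := ({0}ᶜ : Set (EuclideanSpace ℝ (Fin n)))))
        exact (isOpen_compl_singleton).mem_nhds hne
      exact (hexp_cont.continuousAt.mul hφc.continuousAt).mul
        ((Complex.continuous_ofReal.continuousAt).comp hχc)
  have hgsupp : HasCompactSupport g := by
    apply HasCompactSupport.intro (isCompact_closedBall (0 : EuclideanSpace ℝ (Fin n)) (a * R))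
    intro ξ hξ
    have hξn : a * R < ‖ξ‖ := by
      simpa [Metric.mem_closedBall, dist_zero_right, not_le] using hξ
    have hphi : φ (2 ^ (-(j : ℝ)) * ‖ξ‖) = 0 := by
      by_contra hne'
      have h1 := hR _ hne'
      rw [h2j, abs_of_nonneg (by positivity)] at h1
      have h2 : ‖ξ‖ ≤ a * R := by
        have h3 : a * (a⁻¹ * ‖ξ‖) ≤ a * R := mul_le_mul_of_nonneg_left h1 ha0.le
        rwa [← mul_assoc, mul_inv_cancel₀ (ne_of_gt ha0), one_mul] at h3
      linarith
    rw [hgdef]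
    simp only
    rw [hphi]
    simp
  have hgint : Integrable g := hgcont.integrable_of_hasCompactSupport hgsupp
  -- polar coordinates
  set G : Metric.sphere (0 : EuclideanSpace ℝ (Fin n)) 1 × Ioi (0 : ℝ) → ℂ :=
    fun p => g ((p.2 : ℝ) • (p.1 : EuclideanSpace ℝ (Fin n))) with hGdef
  have hmp := Measure.measurePreserving_homeomorphUnitSphereProd
    (volume : Measure (EuclideanSpace ℝ (Fin n)))
  rw [hdim] at hmp
  have hGg : ∀ ξ : ({0}ᶜ : Set (EuclideanSpace ℝ (Fin n))),
      G (homeomorphUnitSphereProd (EuclideanSpace ℝ (Fin n)) ξ) = g ξ := by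
    intro ξ
    have hξ0 : (ξ : EuclideanSpace ℝ (Fin n)) ≠ 0 := ξ.2
    rw [hGdef]
    simp only [homeomorphUnitSphereProd_apply_snd_coe, homeomorphUnitSphereProd_apply_fst_coe]
    rw [smul_inv_smul₀ (norm_ne_zero_iff.mpr hξ0)]
  have hGint : Integrable G
      ((volume : Measure (EuclideanSpace ℝ (Fin n))).toSphere.prod
        (Measure.volumeIoiPow (n - 1))) := by
    rw [← hmp.integrable_comp_emb (Homeomorph.measurableEmbedding _)]
    have heq : (G ∘ (homeomorphUnitSphereProd (EuclideanSpace ℝ (Fin n))))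
        = fun ξ : ({0}ᶜ : Set (EuclideanSpace ℝ (Fin n))) => g ξ := funext hGg
    rw [heq]
    have h2 : Integrable g ((volume : Measure (EuclideanSpace ℝ (Fin n))).restrict
        ({0}ᶜ : Set (EuclideanSpace ℝ (Fin n)))) := hgint.integrableOn
    rwa [← map_comap_subtype_coe (measurableSet_singleton
        (0 : EuclideanSpace ℝ (Fin n))).compl,
      (MeasurableEmbedding.subtype_coe (measurableSet_singleton _).compl).integrable_map_iff] at h2
  have polar : (∫ ξ, g ξ)
      = ∫ u : Metric.sphere (0 : EuclideanSpace ℝ (Fin n)) 1,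
          (∫ r : Ioi (0 : ℝ), G (u, r) ∂(Measure.volumeIoiPow (n - 1)))
          ∂(volume : Measure (EuclideanSpace ℝ (Fin n))).toSphere := by
    rw [← integral_prod G hGint]
    calc (∫ ξ, g ξ)
        = ∫ ξ : ({0}ᶜ : Set (EuclideanSpace ℝ (Fin n))), g ξ
            ∂(Measure.comap Subtype.val volume) := by
          rw [integral_subtype_comap (measurableSet_singleton _).compl,
            restrict_compl_singleton]
      _ = ∫ p, G p ∂((volume : Measure (EuclideanSpace ℝ (Fin n))).toSphere.prod
            (Measure.volumeIoiPow (n - 1))) := by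
          rw [← hmp.integral_comp (Homeomorph.measurableEmbedding _) G]
          simp only [hGg]
  -- per-direction bound
  have key : ∀ u : Metric.sphere (0 : EuclideanSpace ℝ (Fin n)) 1,
      ‖∫ r : Ioi (0 : ℝ), G (u, r) ∂(Measure.volumeIoiPow (n - 1))‖
        ≤ Bχ * (a ^ n * (CM / a ^ M)) := by
    intro u
    have hu1 : ‖(u : EuclideanSpace ℝ (Fin n))‖ = 1 := mem_sphere_zero_iff_norm.mp u.2
    have hu0 : (u : EuclideanSpace ℝ (Fin n)) ≠ 0 := hsphere_ne _ u.2
    have hstep1 : (∫ r : Ioi (0 : ℝ), G (u, r) ∂(Measure.volumeIoiPow (n - 1)))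
        = ∫ r in Ioi (0 : ℝ), (r ^ (n - 1) : ℝ) • g (r • (u : EuclideanSpace ℝ (Fin n))) := by
      simp only [Measure.volumeIoiPow, ENNReal.ofReal]
      rw [integral_withDensity_eq_integral_smul
        ((measurable_subtype_coe.pow_const _).real_toNNReal)
        (fun r : Ioi (0 : ℝ) => G (u, r))]
      rw [show (∫ r : Ioi (0 : ℝ), Real.toNNReal ((r : ℝ) ^ (n - 1)) • G (u, r)
            ∂(Measure.comap Subtype.val volume))
          = ∫ r in Ioi (0 : ℝ), Real.toNNReal (r ^ (n - 1)) •
              g (r • (u : EuclideanSpace ℝ (Fin n))) ∂volume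
        from integral_subtype_comap measurableSet_Ioi
          (fun r : ℝ => Real.toNNReal (r ^ (n - 1)) • g (r • (u : EuclideanSpace ℝ (Fin n))))]
      refine setIntegral_congr_fun measurableSet_Ioi (fun r hr => ?_)
      rw [NNReal.smul_def, Real.coe_toNNReal _ (pow_nonneg (le_of_lt hr) _)]
    rcases eq_or_ne (χ (u : EuclideanSpace ℝ (Fin n))) 0 with hχu | hχu
    · rw [hstep1]
      have hzero : EqOn (fun r : ℝ => (r ^ (n - 1) : ℝ) • g (r • (u : EuclideanSpace ℝ (Fin n))))
          (fun _ => (0 : ℂ)) (Ioi (0 : ℝ)) := by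
        intro r hr
        have hχr : χ (r • (u : EuclideanSpace ℝ (Fin n))) = 0 := by
          rw [hχhom r hr]; exact hχu
        simp only [hgdef, hχr]
        simp
      rw [setIntegral_congr_fun measurableSet_Ioi hzero]
      simp only [integral_zero, norm_zero]
      positivity
    · set κ : ℝ := (inner ℝ x (u : EuclideanSpace ℝ (Fin n)) : ℝ) + t with hκdef
      have hκ1 : 1 ≤ κ := by
        have h0 := hinner_nonneg _ hu1 hχu
        have h1 := ht.1
        rw [hκdef]; linarith
      set F : ℝ → ℂ := fun r =>
        ((r ^ (n - 1) * φ ((2 : ℝ) ^ (-(j : ℝ)) * r) : ℝ) : ℂ) *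
          Complex.exp (((2 * π * κ * r : ℝ) : ℂ) * Complex.I) with hFdef
      have hpt : EqOn (fun r : ℝ => (r ^ (n - 1) : ℝ) • g (r • (u : EuclideanSpace ℝ (Fin n))))
          (fun r : ℝ => (χ (u : EuclideanSpace ℝ (Fin n)) : ℂ) * F r) (Ioi (0 : ℝ)) := by
        intro r hr
        have hr0 : (0 : ℝ) < r := hr
        have hnorm : ‖r • (u : EuclideanSpace ℝ (Fin n))‖ = r := by
          rw [norm_smul, hu1, mul_one, Real.norm_eq_abs, abs_of_pos hr0]
        have hinn : (inner ℝ x (r • (u : EuclideanSpace ℝ (Fin n))) : ℝ)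
            = r * (inner ℝ x (u : EuclideanSpace ℝ (Fin n)) : ℝ) := real_inner_smul_right _ _ _
        have hχr := hχhom r hr0 (u : EuclideanSpace ℝ (Fin n))
        simp only [hgdef, hFdef]
        rw [hnorm, hinn, hχr]
        rw [show (2 * (π : ℂ) * Complex.I *
              (((r * (inner ℝ x (u : EuclideanSpace ℝ (Fin n)) : ℝ) : ℝ) : ℂ) + (t : ℂ) * (r : ℂ)))
            = ((2 * π * κ * r : ℝ) : ℂ) * Complex.I from by rw [hκdef]; push_cast; ring]
        rw [Complex.real_smul]
        push_cast
        ring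
      rw [hstep1, setIntegral_congr_fun measurableSet_Ioi hpt, integral_const_mul]
      have hF0 : ∀ r : ℝ, r ∉ Ioi (0 : ℝ) → F r = 0 := by
        intro r hr
        have hr0 : r ≤ 0 := not_lt.mp hr
        rw [hFdef]
        simp only
        rcases eq_or_lt_of_le hr0 with hre | hrlt
        · subst hre
          rw [zero_pow (by omega : n - 1 ≠ 0)]
          simp
        · have hneg : (2 : ℝ) ^ (-(j : ℝ)) * r ≤ 0 := by
            have : (0 : ℝ) < (2 : ℝ) ^ (-(j : ℝ)) := Real.rpow_pos_of_pos (by norm_num) _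
            nlinarith
          rw [hφ0 _ hneg]
          simp
      rw [setIntegral_eq_integral_of_forall_compl_eq_zero hF0]
      have hscale : a • (∫ ρ : ℝ, F (a * ρ)) = ∫ r : ℝ, F r := by
        rw [Measure.integral_comp_mul_left F a, smul_smul, abs_inv, abs_of_pos ha0,
          mul_inv_cancel₀ (ne_of_gt ha0), one_smul]
      rw [← hscale]
      have hFa : ∀ ρ : ℝ, F (a * ρ)
          = ((a ^ (n - 1) : ℝ) : ℂ) *
            (g₀ ρ * Complex.exp ((((2 * π * κ * a) * ρ : ℝ) : ℂ) * Complex.I)) := by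
        intro ρ
        rw [hFdef]
        simp only
        rw [show (2 : ℝ) ^ (-(j : ℝ)) * (a * ρ) = ρ from by
            rw [h2j, ← mul_assoc, inv_mul_cancel₀ (ne_of_gt ha0), one_mul],
          show (2 * π * κ * (a * ρ) : ℝ) = ((2 * π * κ * a) * ρ : ℝ) from by ring, hg₀def]
        push_cast
        ring
      simp only [hFa]
      rw [integral_const_mul]
      have hκ0 : (0 : ℝ) < κ := lt_of_lt_of_le one_pos hκ1
      have hπ2 : (1 : ℝ) ≤ 2 * π := by nlinarith [Real.pi_gt_three]
      have h2πκ : (1 : ℝ) ≤ 2 * π * κ := by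
        nlinarith [mul_le_mul_of_nonneg_left hκ1 (by linarith : (0:ℝ) ≤ 2 * π)]
      have hμpos : (0 : ℝ) < 2 * π * κ * a := mul_pos (lt_of_lt_of_le one_pos h2πκ) ha0
      have hμa : a ≤ |2 * π * κ * a| := by
        rw [abs_of_pos hμpos]
        calc a = 1 * a := (one_mul a).symm
          _ ≤ (2 * π * κ) * a := mul_le_mul_of_nonneg_right h2πκ ha0.le
      have hJ : ‖∫ ρ : ℝ, g₀ ρ * Complex.exp ((((2 * π * κ * a) * ρ : ℝ) : ℂ) * Complex.I)‖
          ≤ CM / |2 * π * κ * a| ^ M := by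
        rw [hCMdef]
        exact osc_bound g₀ hg₀smooth hg₀supp M _ (le_trans ha1 hμa)
      have hJ2 : ‖∫ ρ : ℝ, g₀ ρ * Complex.exp ((((2 * π * κ * a) * ρ : ℝ) : ℂ) * Complex.I)‖
          ≤ CM / a ^ M := by
        refine hJ.trans ?_
        gcongr
      simp only [norm_mul, norm_smul, Complex.norm_real, Real.norm_eq_abs]
      rw [abs_of_pos ha0, abs_of_pos (pow_pos ha0 (n - 1))]
      have hpow : a * a ^ (n - 1) = a ^ n := by
        rw [← pow_succ']
        congr 1
        omega
      calc |χ (u : EuclideanSpace ℝ (Fin n))| *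
            (a * (a ^ (n - 1) *
              ‖∫ ρ : ℝ, g₀ ρ * Complex.exp ((((2 * π * κ * a) * ρ : ℝ) : ℂ) * Complex.I)‖))
          ≤ Bχ * (a * (a ^ (n - 1) * (CM / a ^ M))) := by
            apply mul_le_mul (hBχ _ hu0) ?_ (by positivity) hBχ0
            apply mul_le_mul_of_nonneg_left ?_ ha0.le
            exact mul_le_mul_of_nonneg_left hJ2 (by positivity)
        _ = Bχ * (a ^ n * (CM / a ^ M)) := by rw [← hpow]; ring
  -- put everything together
  have hratio : a ^ n * (CM / a ^ M) = CM * (2 : ℝ) ^ (-(N : ℝ) * (j : ℝ)) := by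
    have h1 : (2 : ℝ) ^ (-(N : ℝ) * (j : ℝ)) = (a ^ N)⁻¹ := by
      have h2 : (-(N : ℝ) * (j : ℝ)) = -(((N * j : ℕ) : ℝ)) := by push_cast; ring
      rw [h2, Real.rpow_neg (by norm_num : (0 : ℝ) ≤ 2), Real.rpow_natCast, hadef,
        mul_comm N j, pow_mul]
    rw [h1, hMdef, pow_add]
    have han : (a : ℝ) ^ n ≠ 0 := ne_of_gt (pow_pos ha0 _)
    have haN : (a : ℝ) ^ N ≠ 0 := ne_of_gt (pow_pos ha0 _)
    field_simp
  calc ‖∫ ξ, g ξ‖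
      = ‖∫ u : Metric.sphere (0 : EuclideanSpace ℝ (Fin n)) 1,
          (∫ r : Ioi (0 : ℝ), G (u, r) ∂(Measure.volumeIoiPow (n - 1)))
          ∂(volume : Measure (EuclideanSpace ℝ (Fin n))).toSphere‖ := by rw [polar]
    _ ≤ (Bχ * (a ^ n * (CM / a ^ M))) * σv := by
        rw [hσdef]
        exact norm_integral_le_of_norm_le_const (Filter.Eventually.of_forall key)
    _ = (σv * Bχ) * (a ^ n * (CM / a ^ M)) := by ring
    _ = (σv * Bχ * CM) * (2 : ℝ) ^ (-(N : ℝ) * (j : ℝ)) := by rw [hratio]; ring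
    _ ≤ (σv * Bχ * CM + 1) * (2 : ℝ) ^ (-(N : ℝ) * (j : ℝ)) := by
        apply mul_le_mul_of_nonneg_right (by linarith)
          (Real.rpow_nonneg (by norm_num : (0 : ℝ) ≤ 2) _)
end
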